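/- Adequacy: for all modal trees T, T', if T ↪* T', then ℱ(T) ⊢ ℱ(T') is derivable in RC. -/

import Mathlib

namespace TRC

/-- Strictly positive formulas of `L⁺`. -/
inductive SPF : Type where
  | top : SPF
  | var : ℕ → SPF
  | dia : ℕ → SPF → SPF
  | and : SPF → SPF → SPF

/-- The sequent system `K⁺`. -/
inductive KPlus : SPF → SPF → Prop where
  | id (φ) : KPlus φ φ
  | topI (φ) : KPlus φ .top
  | cut {φ ψ χ} : KPlus φ ψ → KPlus ψ χ → KPlus φ χ
  | andE₁ (φ ψ) : KPlus (.and φ ψ) φ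
  | andE₂ (φ ψ) : KPlus (.and φ ψ) ψ
  | andI {φ ψ χ} : KPlus φ ψ → KPlus φ χ → KPlus φ (.and ψ χ)
  | dist {φ ψ} (α) : KPlus φ ψ → KPlus (.dia α φ) (.dia α ψ)

/-- The Reflection Calculus `RC`. -/
inductive RC : SPF → SPF → Prop where
  | id (φ) : RC φ φ
  | topI (φ) : RC φ .top
  | cut {φ ψ χ} : RC φ ψ → RC ψ χ → RC φ χ
  | andE₁ (φ ψ) : RC (.and φ ψ) φ
  | andE₂ (φ ψ) : RC (.and φ ψ) ψ
  | andI {φ ψ χ} : RC φ ψ → RC φ χ → RC φ (.and ψ χ)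
  | dist {φ ψ} (α) : RC φ ψ → RC (.dia α φ) (.dia α ψ)
  | trans (α φ) : RC (.dia α (.dia α φ)) (.dia α φ)
  | mono {α β} (φ) : β < α → RC (.dia α φ) (.dia β φ)
  | jax {α β} (φ ψ) : β < α → RC (.and (.dia α φ) (.dia β ψ)) (.dia α (.and φ (.dia β ψ)))

/-- Modal depth. -/
def SPF.md : SPF → ℕ
  | .top => 0
  | .var _ => 0
  | .dia _ φ => φ.md + 1
  | .and φ ψ => max φ.md ψ.md

/-- Modal trees. -/
inductive MTree : Type where
  | node : List ℕ → List (ℕ × MTree) → MTree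

/-- Sum of modal trees. -/
def MTree.sum : MTree → MTree → MTree
  | .node Δ₁ Γ₁, .node Δ₂ Γ₂ => .node (Δ₁ ++ Δ₂) (Γ₁ ++ Γ₂)

mutual
/-- Height of a modal tree. -/
def MTree.height : MTree → ℕ
  | .node _ Γ => heightL Γ
def heightL : List (ℕ × MTree) → ℕ
  | [] => 0
  | (_, S) :: Γ => max (S.height + 1) (heightL Γ)
end

mutual
/-- `T.IsPos k`: the (1-indexed) string `k` is a position of `T`. -/
def MTree.IsPos : MTree → List ℕ → Prop
  | _, [] => True
  | .node _ Γ, i :: k => isPosL Γ i k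
def isPosL : List (ℕ × MTree) → ℕ → List ℕ → Prop
  | [], _, _ => False
  | _ :: _, 0, _ => False
  | (_, S) :: _, 1, k => S.IsPos k
  | _ :: Γ, n+2, k => isPosL Γ (n+1) k
end

mutual
/-- Subtree of `T` at position `k` (returning a default junk value off positions). -/
def MTree.subtree : MTree → List ℕ → MTree
  | T, [] => T
  | .node Δ Γ, i :: k => subtreeL (.node Δ Γ) Γ i k
def subtreeL : MTree → List (ℕ × MTree) → ℕ → List ℕ → MTree
  | d, [], _, _ => d
  | d, _ :: _, 0, _ => d
  | _, (_, S) :: _, 1, k => S.subtree k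
  | d, _ :: Γ, n+2, k => subtreeL d Γ (n+1) k
end

mutual
/-- `T.replace S k`: replace the subtree of `T` at position `k` by `S`. -/
def MTree.replace : MTree → MTree → List ℕ → MTree
  | _, S, [] => S
  | .node Δ Γ, S, i :: k => .node Δ (replaceL Γ S i k)
def replaceL : List (ℕ × MTree) → MTree → ℕ → List ℕ → List (ℕ × MTree)
  | [], _, _, _ => []
  | Γ, _, 0, _ => Γ
  | (α, C) :: Γ, S, 1, k => (α, C.replace S k) :: Γ
  | x :: Γ, S, n+2, k => x :: replaceL Γ S (n+1) k
end

/-- Names of the eight rewriting rules of TRC. -/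
inductive Rule : Type where
  | rhoP | rhoM | sigma | piP | piM | four | lam | jay
  deriving DecidableEq

/-- One rewriting step performed at the root. -/
inductive RootStep : Rule → MTree → MTree → Prop where
  | rhoP {Δ Γ i p} (hi : 1 ≤ i) (h : Δ[i-1]? = some p) :
      RootStep .rhoP (.node Δ Γ) (.node (p :: Δ) Γ)
  | rhoM {Δ Γ i} (hi : 1 ≤ i) (h : i - 1 < Δ.length) :
      RootStep .rhoM (.node Δ Γ) (.node (Δ.eraseIdx (i-1)) Γ)
  | sigma {Δ Γ i j x y} (hi : 1 ≤ i) (hj : 1 ≤ j) (hij : i ≠ j)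
      (hx : Γ[i-1]? = some x) (hy : Γ[j-1]? = some y) :
      RootStep .sigma (.node Δ Γ) (.node Δ ((Γ.set (j-1) x).set (i-1) y))
  | piP {Δ Γ i x} (hi : 1 ≤ i) (hx : Γ[i-1]? = some x) :
      RootStep .piP (.node Δ Γ) (.node Δ (x :: Γ))
  | piM {Δ Γ i} (hi : 1 ≤ i) (h : i - 1 < Γ.length) :
      RootStep .piM (.node Δ Γ) (.node Δ (Γ.eraseIdx (i-1)))
  | four {Δ Γ i j β Δt Γt S} (hi : 1 ≤ i) (hj : 1 ≤ j)
      (hΓ : Γ[i-1]? = some (β, MTree.node Δt Γt)) (hΓt : Γt[j-1]? = some (β, S)) :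
      RootStep .four (.node Δ Γ) (.node Δ (Γ.set (i-1) (β, S)))
  | lam {Δ Γ i α β S} (hi : 1 ≤ i) (hβ : β < α) (hΓ : Γ[i-1]? = some (α, S)) :
      RootStep .lam (.node Δ Γ) (.node Δ (Γ.set (i-1) (β, S)))
  | jay {Δ Γ i j α β Δt Γt S} (hi : 1 ≤ i) (hj : 1 ≤ j) (hij : i ≠ j) (hβ : β < α)
      (hΓi : Γ[i-1]? = some (α, MTree.node Δt Γt)) (hΓj : Γ[j-1]? = some (β, S)) :
      RootStep .jay (.node Δ Γ)
        (.node Δ ((Γ.set (i-1) (α, MTree.node Δt (Γt ++ [(β, S)]))).eraseIdx (j-1)))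

/-- One step of the rule `r`, applied at some position. -/
def StepR (r : Rule) (T T' : MTree) : Prop :=
  ∃ k S, T.IsPos k ∧ RootStep r (T.subtree k) S ∧ T' = T.replace S k

/-- One step of the rewriting relation `↪`. -/
def Step (T T' : MTree) : Prop := ∃ r, StepR r T T'

/-- The rewriting relation `↪*`. -/
def Steps : MTree → MTree → Prop := Relation.ReflTransGen Step

/-- TRC-equivalence `↔*`. -/
def TEquiv (T T' : MTree) : Prop := Steps T T' ∧ Steps T' T

/-- `T ↪^Ω S` : rewriting applying the rules of `Ω` in order, one step each. -/
inductive StepsOf : List Rule → MTree → MTree → Prop where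
  | nil (T) : StepsOf [] T T
  | cons {r Ω T U S} : StepR r T U → StepsOf Ω U S → StepsOf (r :: Ω) T S

def AtomicStep (T S : MTree) : Prop := StepR .rhoP T S ∨ StepR .rhoM T S
def DecreasingStep (T S : MTree) : Prop := StepR .piM T S ∨ StepR .four T S
def ModalStep (T S : MTree) : Prop := StepR .lam T S ∨ StepR .jay T S

/-- Finite conjunctions (empty conjunction is `⊤`). -/
def bigAnd : List SPF → SPF
  | [] => .top
  | φ :: l => .and φ (bigAnd l)

mutual
/-- The embedding `ℱ` of modal trees into formulas. -/
def MTree.toFormula : MTree → SPF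
  | .node Δ Γ => .and (bigAnd (Δ.map SPF.var)) (diamL Γ)
def diamL : List (ℕ × MTree) → SPF
  | [] => .top
  | (α, S) :: Γ => .and (.dia α S.toFormula) (diamL Γ)
end

/-- The embedding `𝒯` of formulas into modal trees. -/
def SPF.toTree : SPF → MTree
  | .top => .node [] []
  | .var p => .node [p] []
  | .dia α φ => .node [] [(α, φ.toTree)]
  | .and φ ψ => φ.toTree.sum ψ.toTree

/-- Nonempty conjunction `φ₁ ∧ (φ₂ ∧ (… ∧ φₙ))`. -/
def conjNE : SPF → List SPF → SPF
  | φ, [] => φ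
  | φ, ψ :: l => .and φ (conjNE ψ l)

end TRC

/-!
Every rule of TRC is sound at the root: `ρ`, `σ` and `π` only duplicate, erase or permute
conjuncts of `ℱ(T)`, while `𝔣4`, `λ` and `J` are instances of the RC axioms
`⟨β⟩⟨β⟩φ ⊢ ⟨β⟩φ`, `⟨α⟩φ ⊢ ⟨β⟩φ` and `⟨α⟩φ ∧ ⟨β⟩ψ ⊢ ⟨α⟩(φ ∧ ⟨β⟩ψ)`. Since `∧` and `⟨α⟩` are
monotone in RC, a sound rewrite of a subtree is sound for the whole tree.
-/

namespace TRC

/-- The conjunct `⟨α⟩ℱ(S)` contributed to `ℱ(⟨Δ;Γ⟩)` by an element `(α, S)` of `Γ`. -/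
def childFormula (x : ℕ × MTree) : SPF := .dia x.1 x.2.toFormula

theorem diamL_eq_bigAnd (Γ : List (ℕ × MTree)) : diamL Γ = bigAnd (Γ.map childFormula) := by
  induction Γ with
  | nil => rfl
  | cons x Γ ih => simp [diamL, bigAnd, ih, childFormula]

theorem toFormula_node (Δ : List ℕ) (Γ : List (ℕ × MTree)) :
    (MTree.node Δ Γ).toFormula = .and (bigAnd (Δ.map .var)) (bigAnd (Γ.map childFormula)) := by
  rw [MTree.toFormula, diamL_eq_bigAnd]

namespace RC

theorem and_mono {φ ψ φ' ψ' : SPF} (hφ : RC φ φ') (hψ : RC ψ ψ') :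
    RC (.and φ ψ) (.and φ' ψ') :=
  .andI (.cut (.andE₁ φ ψ) hφ) (.cut (.andE₂ φ ψ) hψ)

theorem bigAnd_elim {l : List SPF} {φ : SPF} (h : φ ∈ l) : RC (bigAnd l) φ := by
  induction l with
  | nil => simp at h
  | cons ψ l ih =>
    rcases List.mem_cons.mp h with rfl | h
    · exact .andE₁ _ _
    · exact .cut (.andE₂ _ _) (ih h)

theorem bigAnd_intro {l : List SPF} {χ : SPF} (h : ∀ φ ∈ l, RC χ φ) : RC χ (bigAnd l) := by
  induction l with
  | nil => exact .topI _
  | cons ψ l ih => exact .andI (h ψ (by simp)) (ih fun φ hφ => h φ (by simp [hφ]))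

theorem node_childFormula {Δ : List ℕ} {Γ : List (ℕ × MTree)} {x : ℕ × MTree} (hx : x ∈ Γ) :
    RC (MTree.node Δ Γ).toFormula (childFormula x) := by
  rw [toFormula_node]
  exact .cut (.andE₂ _ _) (bigAnd_elim (List.mem_map_of_mem hx))

theorem node_of_subset {Δ Δ' : List ℕ} {Γ Γ' : List (ℕ × MTree)} (hΔ : Δ' ⊆ Δ) (hΓ : Γ' ⊆ Γ) :
    RC (MTree.node Δ Γ).toFormula (MTree.node Δ' Γ').toFormula := by
  rw [toFormula_node, toFormula_node]
  exact and_mono (bigAnd_intro fun _ hφ => bigAnd_elim (List.map_subset _ hΔ hφ))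
    (bigAnd_intro fun _ hφ => bigAnd_elim (List.map_subset _ hΓ hφ))

theorem node_of_forall_childFormula {Δ : List ℕ} {Γ Γ' : List (ℕ × MTree)}
    (h : ∀ x ∈ Γ', RC (MTree.node Δ Γ).toFormula (childFormula x)) :
    RC (MTree.node Δ Γ).toFormula (MTree.node Δ Γ').toFormula := by
  refine .andI (.andE₁ _ _) ?_
  rw [diamL_eq_bigAnd]
  exact bigAnd_intro fun _ hφ => by
    obtain ⟨x, hx, rfl⟩ := List.mem_map.mp hφ
    exact h x hx

theorem node_set {Δ : List ℕ} {Γ : List (ℕ × MTree)} {n : ℕ} {y : ℕ × MTree}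
    (hy : RC (MTree.node Δ Γ).toFormula (childFormula y)) :
    RC (MTree.node Δ Γ).toFormula (MTree.node Δ (Γ.set n y)).toFormula :=
  node_of_forall_childFormula fun _ hx => (List.mem_or_eq_of_mem_set hx).elim
    node_childFormula (· ▸ hy)

theorem node_append_of_and_childFormula (Δ : List ℕ) (Γ : List (ℕ × MTree)) (x : ℕ × MTree) :
    RC (.and (MTree.node Δ Γ).toFormula (childFormula x))
      (MTree.node Δ (Γ ++ [x])).toFormula := by
  rw [toFormula_node, toFormula_node]
  refine .andI (.cut (.andE₁ _ _) (.andE₁ _ _)) (bigAnd_intro fun φ hφ => ?_)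
  rcases List.mem_append.mp (List.map_append ▸ hφ) with hφ | hφ
  · exact .cut (.andE₁ _ _) (.cut (.andE₂ _ _) (bigAnd_elim hφ))
  · rw [List.map_singleton, List.mem_singleton] at hφ
    exact hφ ▸ .andE₂ _ _

theorem childFormula_four {β : ℕ} {Δ : List ℕ} {Γ : List (ℕ × MTree)} {S : MTree}
    (hS : (β, S) ∈ Γ) : RC (childFormula (β, .node Δ Γ)) (childFormula (β, S)) :=
  .cut (.dist β (node_childFormula hS)) (.trans β S.toFormula)

theorem childFormula_jay {α β : ℕ} (hβ : β < α) (Δ : List ℕ) (Γ : List (ℕ × MTree)) (S : MTree) :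
    RC (.and (childFormula (α, .node Δ Γ)) (childFormula (β, S)))
      (childFormula (α, .node Δ (Γ ++ [(β, S)]))) :=
  .cut (.jax _ _ hβ) (.dist α (node_append_of_and_childFormula Δ Γ (β, S)))

theorem of_rootStep {r : Rule} {T S : MTree} (h : RootStep r T S) :
    RC T.toFormula S.toFormula := by
  cases h with
  | rhoP _ h =>
    exact node_of_subset (List.cons_subset.mpr ⟨List.mem_of_getElem? h, .refl _⟩) (.refl _)
  | rhoM => exact node_of_subset List.eraseIdx_subset (.refl _)
  | sigma _ _ _ hx hy =>
    refine node_of_subset (.refl _) fun z hz => ?_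
    rcases List.mem_or_eq_of_mem_set hz with hz | rfl
    · rcases List.mem_or_eq_of_mem_set hz with hz | rfl
      exacts [hz, List.mem_of_getElem? hx]
    · exact List.mem_of_getElem? hy
  | piP _ hx =>
    exact node_of_subset (.refl _) (List.cons_subset.mpr ⟨List.mem_of_getElem? hx, .refl _⟩)
  | piM => exact node_of_subset (.refl _) List.eraseIdx_subset
  | four _ _ hΓ hΓt =>
    exact node_set (.cut (node_childFormula (List.mem_of_getElem? hΓ))
      (childFormula_four (List.mem_of_getElem? hΓt)))
  | lam _ hβ hΓ => exact node_set (.cut (node_childFormula (List.mem_of_getElem? hΓ)) (.mono _ hβ))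
  | jay _ _ _ hβ hΓi hΓj =>
    refine .cut (node_set ?_) (node_of_subset (.refl _) List.eraseIdx_subset)
    exact .cut (.andI (node_childFormula (List.mem_of_getElem? hΓi))
      (node_childFormula (List.mem_of_getElem? hΓj))) (childFormula_jay hβ _ _ _)

theorem diamL_replaceL {k : List ℕ}
    (hk : ∀ C S : MTree, C.IsPos k → RC (C.subtree k).toFormula S.toFormula →
      RC C.toFormula (C.replace S k).toFormula) :
    ∀ (Γ : List (ℕ × MTree)) (i : ℕ) (d S : MTree), isPosL Γ i k →
      RC (subtreeL d Γ i k).toFormula S.toFormula → RC (diamL Γ) (diamL (replaceL Γ S i k))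
  | [], _, _, _, hpos, _ => hpos.elim
  | _ :: _, 0, _, _, hpos, _ => hpos.elim
  | (α, C) :: _, 1, _, S, hpos, h => and_mono (.dist α (hk C S hpos h)) (.id _)
  | _ :: Γ, n + 2, d, S, hpos, h => and_mono (.id _) (diamL_replaceL hk Γ (n + 1) d S hpos h)

theorem replace_of_subtree {k : List ℕ} {T S : MTree} (hk : T.IsPos k)
    (h : RC (T.subtree k).toFormula S.toFormula) : RC T.toFormula (T.replace S k).toFormula := by
  induction k generalizing T S with
  | nil => cases T; exact h
  | cons i k ih =>
    obtain ⟨Δ, Γ⟩ := T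
    exact and_mono (.id _) (diamL_replaceL (fun _ _ => ih) Γ i _ S hk h)

theorem of_step {T T' : MTree} (h : Step T T') : RC T.toFormula T'.toFormula := by
  obtain ⟨_, k, S, hk, hroot, rfl⟩ := h
  exact replace_of_subtree hk (of_rootStep hroot)

end RC

end TRC

/-- Adequacy: if `T ↪* T'` then `ℱ(T) ⊢_{RC} ℱ(T')`. -/
theorem adequacy (T T' : TRC.MTree) (h : TRC.Steps T T') :
    TRC.RC T.toFormula T'.toFormula := by
  induction h with
  | refl => exact .id _
  | tail _ hstep ih => exact .cut ih (TRC.RC.of_step hstep)
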